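/- arXiv:2512.07555 — 2 statements merged into one kernel-verified Lean document; each statement's English description precedes it below -/
import Mathlib

section
/- Let I ⊂ ℝ be an open interval and f : I → ℝ a function such that the derivative f' exists and is finite Lebesgue-almost everywhere on I, and the second derivative f'' exists and is finite Lebesgue-almost everywhere on I. Then f''(x)·1_{f'(x)=0} = 0 for Lebesgue-almost every x ∈ I. -/
open MeasureTheory Set

/-- If `f : I → ℝ` on an open interval `I ⊆ ℝ` has a (finite) derivative `f'`
Lebesgue-a.e. on `I` and `f'` has a (finite) derivative `f''` Lebesgue-a.e. on `I`, then
`f'' · 1_{f' = 0} = 0` Lebesgue-a.e. on `I`. -/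
theorem stmt1
    (I : Set ℝ) (hI : IsOpen I) (hIc : Convex ℝ I)
    (f f' f'' : ℝ → ℝ)
    (h1 : ∀ᵐ x ∂(volume.restrict I), HasDerivAt f (f' x) x)
    (h2 : ∀ᵐ x ∂(volume.restrict I), HasDerivAt f' (f'' x) x) :
    ∀ᵐ x ∂(volume.restrict I), ({y : ℝ | f' y = 0}.indicator f'') x = 0 := by
  set B : Set ℝ := {x | f' x = 0 ∧ HasDerivAt f' (f'' x) x ∧ f'' x ≠ 0} with hBdef
  -- every point of `B` is isolated in `B`
  have hdisc : DiscreteTopology B := by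
    rw [discreteTopology_subtype_iff]
    intro x hx
    obtain ⟨hfx, hd, hne⟩ := hx
    rw [Filter.inf_principal_eq_bot]
    have hslope : Filter.Tendsto (slope f' x) (nhdsWithin x {x}ᶜ) (nhds (f'' x)) :=
      hasDerivAt_iff_tendsto_slope.mp hd
    have hev : ∀ᶠ y in nhdsWithin x {x}ᶜ, slope f' x y ≠ 0 :=
      hslope (isOpen_compl_singleton.mem_nhds hne)
    filter_upwards [hev] with y hy hyB
    apply hy
    rw [slope_def_field, hfx, hyB.1]
    simp [div_eq_zero_iff]
  -- hence `B` is countable, thus null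
  have hBc : B.Countable := (HereditarilyLindelof_LindelofSets B).countable hdisc
  have hB0 : volume B = 0 := hBc.measure_zero _
  have hBae : ∀ᵐ x ∂(volume.restrict I), x ∉ B :=
    ae_restrict_of_ae (by simpa [ae_iff] using hB0)
  filter_upwards [h2, hBae] with x hx2 hxB
  by_cases hfx : f' x = 0
  · rw [indicator_of_mem (by exact hfx)]
    by_contra hne
    exact hxB ⟨hfx, hx2, hne⟩
  · exact indicator_of_notMem (show x ∉ {y : ℝ | f' y = 0} from hfx) f''
end

section
/- Let (rₙ) be positive reals with ∑ₙ 2rₙ ≤ a < 1, let {qₙ} enumerate ℚ ∩ [0,1], let F = [0,1] \ ⋃ₙ(qₙ−rₙ, qₙ+rₙ), and let 𝔮(x) = ∫_0^x d_F(z)dz with d_F the distance to F. Then the pushforward of Lebesgue measure under 𝔮^{-1}, restricted to 𝔮(ℝ), assigns positive mass to 𝔮(F'), for any Borel subset F' ⊂ F with λ(F') > 0; equivalently, the measure ν(dx) := 1_F(x) λ(dx) on ℝ is a nonzero measure concentrated on the zero set of 𝔮'. -/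
/-!
The removed intervals have total length at most `∑ 2 rₙ ≤ a < 1`, so `F` keeps measure at least
`1 - a > 0`. Since `F` is closed and nonempty, `d_F` vanishes exactly on `F`, and the fundamental
theorem of calculus for the continuous integrand `d_F` gives `𝔮' = d_F`.
-/

open MeasureTheory Set

theorem measure_sdiff_pos_of_lt {α : Type*} [MeasurableSpace α] {μ : Measure α} {s t : Set α}
    (h : μ t < μ s) : 0 < μ (s \ t) :=
  (tsub_pos_of_lt h).trans_le le_measure_sdiff

theorem volume_iUnion_Ioo_le_tsum {c r : ℕ → ℝ} (hr : ∀ n, 0 ≤ r n)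
    (hsummable : Summable fun n => 2 * r n) :
    volume (⋃ n, Ioo (c n - r n) (c n + r n)) ≤ ENNReal.ofReal (∑' n, 2 * r n) :=
  calc volume (⋃ n, Ioo (c n - r n) (c n + r n))
      _ ≤ ∑' n, volume (Ioo (c n - r n) (c n + r n)) := measure_iUnion_le _
      _ = ∑' n, ENNReal.ofReal (2 * r n) := by
        congr 1; funext n; rw [Real.volume_Ioo]; ring_nf
      _ = ENNReal.ofReal (∑' n, 2 * r n) :=
        (ENNReal.ofReal_tsum_of_nonneg (fun n => mul_nonneg zero_le_two (hr n)) hsummable).symm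

theorem volume_Icc_sdiff_iUnion_Ioo_pos {c r : ℕ → ℝ} {a : ℝ} (ha1 : a < 1)
    (hr : ∀ n, 0 ≤ r n) (hsummable : Summable fun n => 2 * r n) (hsum : ∑' n, 2 * r n ≤ a) :
    0 < volume (Icc (0 : ℝ) 1 \ ⋃ n, Ioo (c n - r n) (c n + r n)) := by
  refine measure_sdiff_pos_of_lt ?_
  calc volume (⋃ n, Ioo (c n - r n) (c n + r n))
      _ ≤ ENNReal.ofReal (∑' n, 2 * r n) := volume_iUnion_Ioo_le_tsum hr hsummable
      _ < 1 := ENNReal.ofReal_lt_one.mpr (hsum.trans_lt ha1)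
      _ = volume (Icc (0 : ℝ) 1) := by simp

theorem IsClosed.setOf_infDist_eq_zero {X : Type*} [PseudoMetricSpace X] {s : Set X}
    (hs : IsClosed s) (hne : s.Nonempty) : {x | Metric.infDist x s = 0} = s :=
  ext fun _ => (hs.mem_iff_infDist_zero hne).symm

theorem stmt16_general
    (qe : ℕ → ℝ)
    (a : ℝ) (ha1 : a < 1)
    (r : ℕ → ℝ) (hr : ∀ n, 0 < r n)
    (hsummable : Summable (fun n => 2 * r n))
    (hsum : (∑' n, 2 * r n) ≤ a)
    (F : Set ℝ) (hF : F = Icc (0:ℝ) 1 \ ⋃ n, Ioo (qe n - r n) (qe n + r n))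
    (q : ℝ → ℝ) (hq : q = fun x => ∫ z in (0:ℝ)..x, Metric.infDist z F) :
    (∀ x : ℝ, HasDerivAt q (Metric.infDist x F) x) ∧
    {x : ℝ | Metric.infDist x F = 0} = F ∧
    volume.restrict F ≠ 0 ∧
    (volume.restrict F) {x : ℝ | Metric.infDist x F ≠ 0} = 0 ∧
    (∀ F' : Set ℝ, F' ⊆ F → MeasurableSet F' → 0 < volume F' →
      0 < volume (q ⁻¹' (q '' F'))) := by
  have hFclosed : IsClosed F := hF ▸ isClosed_Icc.sdiff (isOpen_iUnion fun _ => isOpen_Ioo)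
  have hFpos : 0 < volume F :=
    hF ▸ volume_Icc_sdiff_iUnion_Ioo_pos ha1 (fun n => (hr n).le) hsummable hsum
  have hzero := hFclosed.setOf_infDist_eq_zero (nonempty_of_measure_ne_zero hFpos.ne')
  have hnonzero : {x : ℝ | Metric.infDist x F ≠ 0} = Fᶜ := by
    rw [← compl_ofPred, hzero]
  refine ⟨fun x => ?_, hzero, Measure.restrict_eq_zero.not.mpr hFpos.ne', ?_,
    fun F' _ _ hpos => hpos.trans_le (measure_mono (subset_preimage_image q F'))⟩
  · subst hq
    exact ((Metric.continuous_infDist_pt F).integral_hasStrictDerivAt 0 x).hasDerivAt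
  · rw [hnonzero, Measure.restrict_apply hFclosed.measurableSet.compl, compl_inter_self,
      measure_empty]

/-- Let `F = [0,1] \ ⋃ₙ (qₙ−rₙ, qₙ+rₙ)` be a fat-Cantor-type set
(`λ F ≥ 1 − a > 0`) and `𝔮(x) = ∫_0^x d_F(z) dz`. Then `𝔮' = d_F` vanishes exactly on `F`,
the measure `ν(dx) = 1_F(x) λ(dx)` is nonzero and concentrated on the zero set of `𝔮'`, and
(for the pushforward of `λ` under `𝔮⁻¹`) every Borel `F' ⊆ F` with `λ F' > 0` satisfies
`λ(𝔮⁻¹(𝔮(F'))) > 0`. -/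
theorem stmt16
    (qe : ℕ → ℝ)
    (hqe : Set.range qe = {x : ℝ | x ∈ Icc (0:ℝ) 1 ∧ ∃ s : ℚ, (s : ℝ) = x})
    (a : ℝ) (ha0 : 0 < a) (ha1 : a < 1)
    (r : ℕ → ℝ) (hr : ∀ n, 0 < r n)
    (hsummable : Summable (fun n => 2 * r n))
    (hsum : (∑' n, 2 * r n) ≤ a)
    (F : Set ℝ) (hF : F = Icc (0:ℝ) 1 \ ⋃ n, Ioo (qe n - r n) (qe n + r n))
    (q : ℝ → ℝ) (hq : q = fun x => ∫ z in (0:ℝ)..x, Metric.infDist z F) :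
    (∀ x : ℝ, HasDerivAt q (Metric.infDist x F) x) ∧
    {x : ℝ | Metric.infDist x F = 0} = F ∧
    volume.restrict F ≠ 0 ∧
    (volume.restrict F) {x : ℝ | Metric.infDist x F ≠ 0} = 0 ∧
    (∀ F' : Set ℝ, F' ⊆ F → MeasurableSet F' → 0 < volume F' →
      0 < volume (q ⁻¹' (q '' F'))) :=
  stmt16_general qe a ha1 r hr hsummable hsum F hF q hq
end
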